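/- The function Δ₆ has a first-order zero at s = 3/4 with expansion Δ₆(3/4 + δ) = (2(√π·Γ(1/4)·ζ(1/2) + Γ(3/4)·ζ(3/2))/(√π·Γ(1/4) + Γ(3/4)))·δ + O(δ²); precisely, the limit of Δ₆(3/4 + h)/h as h → 0 (h ≠ 0, h ∈ ℂ) equals 2(√π·Γ(1/4)·ζ(1/2) + Γ(3/4)·ζ(3/2))/(√π·Γ(1/4) + Γ(3/4)), where ζ denotes the Riemann zeta function. -/

import Mathlib

open Filter

noncomputable def D (s : ℂ) : ℂ :=
  ((Real.pi ^ (-(1/4) : ℝ) : ℝ) * Complex.Gamma s +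
    (Real.pi ^ ((1/4) : ℝ) : ℝ) * Complex.Gamma (s - 1/2)) / Complex.Gamma (s - 1/4)

noncomputable def Δ₆ (s : ℂ) : ℂ :=
  (completedRiemannZeta (2 * s) + completedRiemannZeta (2 * s - 1)) /
    (completedRiemannZeta (2 * s - 1/2) * D s)


/-!
Writing `s = 3/4 + h`, the denominator of `Δ₆` contains `Λ(1 + 2h)`, which has a simple pole with
residue `1` at `h = 0`, while `Λ(3/2 + 2h) + Λ(1/2 + 2h)` and `D(3/4 + h)` are continuous there.
Hence `Δ₆(3/4 + h) / h → 2 (Λ(3/2) + Λ(1/2)) / D(3/4)`. Since `Λ(x) = π^(-x/2) Γ(x/2) ζ(x)` for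
`x > 0` and `Γ(1/2) = √π`, all three values are `π^(-3/4)` times an expression in
`√π, Γ(1/4), Γ(3/4)` and the zeta values, and the powers of `π` cancel.
-/

open Topology Complex

lemma Real.rpow_intCast_div {x : ℝ} (hx : 0 ≤ x) (k : ℤ) (n : ℝ) :
    x ^ ((k : ℝ) / n) = (x ^ (1 / n)) ^ k := by
  rw [← Real.rpow_mul_intCast hx, one_div_mul_eq_div]

lemma Complex.differentiableAt_Gamma_of_re_pos {s : ℂ} (hs : 0 < s.re) :
    DifferentiableAt ℂ Gamma s := by
  refine differentiableAt_Gamma s fun m hm => ?_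
  have := congrArg re hm
  simp only [neg_re, natCast_re] at this
  linarith [m.cast_nonneg (α := ℝ)]

lemma completedRiemannZeta_eq_Gammaℝ_mul_riemannZeta {s : ℂ} (hs : 0 < s.re) :
    completedRiemannZeta s = Gammaℝ s * riemannZeta s := by
  have hs0 : s ≠ 0 := fun h => by simp [h] at hs
  rw [riemannZeta_def_of_ne_zero hs0, mul_div_cancel₀ _ (Gammaℝ_ne_zero_of_re_pos hs)]

lemma completedRiemannZeta_ofReal {x : ℝ} (hx : 0 < x) :
    completedRiemannZeta x = (Real.pi ^ (-x / 2) : ℝ) * Gamma (x / 2) * riemannZeta x := by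
  rw [completedRiemannZeta_eq_Gammaℝ_mul_riemannZeta (by simpa using hx), Gammaℝ_def,
    ofReal_cpow Real.pi_pos.le]
  push_cast
  rfl

lemma tendsto_mul_completedRiemannZeta_one_add_mul {c : ℂ} (hc : c ≠ 0) :
    Tendsto (fun h : ℂ => c * h * completedRiemannZeta (1 + c * h)) (𝓝[≠] 0) (𝓝 1) := by
  have hmap : Tendsto (fun h : ℂ => 1 + c * h) (𝓝[≠] 0) (𝓝[≠] 1) := by
    refine tendsto_nhdsWithin_of_tendsto_nhds_of_eventually_within _ ?_ ?_
    · exact (Continuous.tendsto' (by fun_prop) 0 1 (by simp)).mono_left nhdsWithin_le_nhds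
    · filter_upwards [self_mem_nhdsWithin] with h hh
      simpa [hc] using hh
  refine (completedRiemannZeta_residue_one.comp hmap).congr fun h => ?_
  simp

lemma tendsto_comp_add_mul_nhdsNE {f : ℂ → ℂ} {a : ℂ} (hf : ContinuousAt f a) (c : ℂ) :
    Tendsto (fun h => f (a + c * h)) (𝓝[≠] 0) (𝓝 (f a)) :=
  (hf.tendsto.comp (Continuous.tendsto' (by fun_prop) 0 a (by simp))).mono_left nhdsWithin_le_nhds

lemma continuousAt_D {s : ℂ} (hs : 1 / 2 < s.re) : ContinuousAt D s := by
  have hΓ : ∀ a : ℂ, a.re < s.re → ContinuousAt (fun s => Gamma (s - a)) s := fun a ha =>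
    (differentiableAt_Gamma_of_re_pos (by simp; linarith)).continuousAt.comp
      (continuousAt_id.sub continuousAt_const)
  have hΓs : ContinuousAt Gamma s := (differentiableAt_Gamma_of_re_pos (by linarith)).continuousAt
  have hΓ0 : Gamma (s - 1 / 4) ≠ 0 := Gamma_ne_zero_of_re_pos (by simp; linarith)
  unfold D
  exact ((continuousAt_const.mul hΓs).add
    (continuousAt_const.mul (hΓ (1 / 2) (by simpa using hs)))).div
    (hΓ (1 / 4) (by norm_num; linarith)) hΓ0

lemma completedRiemannZeta_one_half :
    completedRiemannZeta (1 / 2) =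
      √Real.pi * Gamma (1 / 4) * riemannZeta (1 / 2) / (Real.pi ^ (3 / 4 : ℝ) : ℝ) := by
  have := completedRiemannZeta_ofReal (x := 1 / 2) (by norm_num)
  push_cast at this
  rw [this, show (-(1 / 2) / 2 : ℝ) = 1 / 2 - 3 / 4 by norm_num, Real.rpow_sub Real.pi_pos,
    Real.sqrt_eq_rpow]
  push_cast
  ring_nf

lemma completedRiemannZeta_three_halves :
    completedRiemannZeta (3 / 2) =
      Gamma (3 / 4) * riemannZeta (3 / 2) / (Real.pi ^ (3 / 4 : ℝ) : ℝ) := by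
  have := completedRiemannZeta_ofReal (x := 3 / 2) (by norm_num)
  push_cast at this
  rw [this, show (-(3 / 2) / 2 : ℝ) = -(3 / 4) by norm_num, Real.rpow_neg Real.pi_pos.le]
  push_cast
  ring_nf

lemma D_three_quarters :
    D (3 / 4) = (√Real.pi * Gamma (1 / 4) + Gamma (3 / 4)) / (Real.pi ^ (3 / 4 : ℝ) : ℝ) := by
  have hq : ∀ k : ℤ, Real.pi ^ ((k : ℝ) / 4) = (Real.pi ^ (1 / 4 : ℝ)) ^ k := fun k =>
    Real.rpow_intCast_div Real.pi_pos.le k 4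
  have hq0 : Real.pi ^ (1 / 4 : ℝ) ≠ 0 := (Real.rpow_pos_of_pos Real.pi_pos _).ne'
  have hsqrt : √Real.pi = Real.pi ^ ((2 : ℤ) / 4 : ℝ) := by
    rw [Real.sqrt_eq_rpow]
    norm_num
  have hΓ : Gamma (1 / 2) = √Real.pi := by
    rw [← Real.Gamma_one_half_eq, ← Gamma_ofReal]
    norm_num
  rw [D, show (3 / 4 : ℂ) - 1 / 2 = 1 / 4 by norm_num, show (3 / 4 : ℂ) - 1 / 4 = 1 / 2 by norm_num,
    hΓ, hsqrt, show (-(1 / 4) : ℝ) = ((-1 : ℤ) : ℝ) / 4 by norm_num,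
    show (3 / 4 : ℝ) = ((3 : ℤ) : ℝ) / 4 by norm_num, hq, hq, hq]
  push_cast
  field_simp
  ring

lemma D_three_quarters_ne_zero : D (3 / 4) ≠ 0 := by
  have hpos : 0 < √Real.pi * Real.Gamma (1 / 4) + Real.Gamma (3 / 4) := by positivity
  rw [D_three_quarters, show (1 / 4 : ℂ) = (1 / 4 : ℝ) by norm_num,
    show (3 / 4 : ℂ) = (3 / 4 : ℝ) by norm_num, Gamma_ofReal, Gamma_ofReal]
  exact div_ne_zero (by exact_mod_cast hpos.ne')
    (by exact_mod_cast (Real.rpow_pos_of_pos Real.pi_pos _).ne')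

/-- Both sides are `0` at `h = 0`, by the convention `x / 0 = 0`. -/
lemma Δ₆_three_quarters_add_div (h : ℂ) :
    Δ₆ (3 / 4 + h) / h =
      2 * (completedRiemannZeta (3 / 2 + 2 * h) + completedRiemannZeta (1 / 2 + 2 * h)) /
        (2 * h * completedRiemannZeta (1 + 2 * h) * D (3 / 4 + h)) := by
  rw [Δ₆, show 2 * (3 / 4 + h) = 3 / 2 + 2 * h by ring,
    show 3 / 2 + 2 * h - 1 = 1 / 2 + 2 * h by ring, show 3 / 2 + 2 * h - 1 / 2 = 1 + 2 * h by ring]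
  field_simp

theorem Delta6_zero_at_three_quarters :
    Tendsto (fun h : ℂ => Δ₆ (3/4 + h) / h) (nhdsWithin 0 {0}ᶜ)
      (nhds (2 * ((Real.sqrt Real.pi : ℂ) * Complex.Gamma (1/4) * riemannZeta (1/2) +
          Complex.Gamma (3/4) * riemannZeta (3/2)) /
        ((Real.sqrt Real.pi : ℂ) * Complex.Gamma (1/4) + Complex.Gamma (3/4)))) := by
  have hΛ : ∀ a : ℂ, a ≠ 0 → a ≠ 1 → ContinuousAt completedRiemannZeta a := fun a h0 h1 =>
    (differentiableAt_completedZeta h0 h1).continuousAt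
  have hnum := (tendsto_comp_add_mul_nhdsNE (hΛ (3 / 2) (by norm_num) (by norm_num)) 2).add
    (tendsto_comp_add_mul_nhdsNE (hΛ (1 / 2) (by norm_num) (by norm_num)) 2)
  have hD := tendsto_comp_add_mul_nhdsNE (continuousAt_D (s := 3 / 4) (by norm_num)) 1
  simp only [one_mul] at hD
  have hlim := (hnum.const_mul 2).div
    ((tendsto_mul_completedRiemannZeta_one_add_mul two_ne_zero).mul hD)
    (by simpa using D_three_quarters_ne_zero)
  have hπ : ((Real.pi ^ (3 / 4 : ℝ) : ℝ) : ℂ) ≠ 0 := by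
    exact_mod_cast (Real.rpow_pos_of_pos Real.pi_pos _).ne'
  rw [one_mul, completedRiemannZeta_one_half, completedRiemannZeta_three_halves, D_three_quarters,
    ← add_div, mul_div_assoc', div_div_div_cancel_right₀ hπ, add_comm] at hlim
  exact hlim.congr fun h => (Δ₆_three_quarters_add_div h).symm
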